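/- Let f1, f2 be homogeneous polynomials of degrees d1, d2 in A[X1,X2] forming a regular sequence, and let β = (β1, β2) ∈ ℕ² with β1 + β2 ≤ d1 − 1. Write f_i = X1^{β1+1} f_{i,1} + X2^{β2+1} f_{i,2} for i = 1,2 with f_{i,j} homogeneous of degree d_i − β_j − 1. Then the class in B = A[X1,X2]/(f1,f2) of det(f_{i,j})_{i,j=1,2} is independent of the chosen decompositions. -/
import Mathlib


open MvPolynomial

/-- If `X0^q * u + X1^p * v = 0` in `A[X0,X1]`, then `u = X1^p * w` and
`v = -(X0^q * w)` for some `w`. -/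
lemma aux_syzygy {A : Type*} [CommRing A] (q p : ℕ) (u v : MvPolynomial (Fin 2) A)
    (h : X 0 ^ q * u + X 1 ^ p * v = 0) :
    ∃ w, u = X 1 ^ p * w ∧ v = -(X 0 ^ q * w) := by
  have hdvd : (X 1 : MvPolynomial (Fin 2) A) ^ p ∣ u := by
    rw [X_pow_eq_monomial, monomial_one_dvd_iff_modMonomial_eq_zero]
    ext s
    by_cases hle : Finsupp.single (1 : Fin 2) p ≤ s
    · simp [coeff_modMonomial_of_le _ hle]
    · rw [coeff_modMonomial_of_not_le _ hle, coeff_zero]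
      have h2 := congrArg (coeff (Finsupp.single (0 : Fin 2) q + s)) h
      rw [coeff_add, coeff_zero, X_pow_eq_monomial, X_pow_eq_monomial,
        coeff_monomial_mul, coeff_monomial_mul'] at h2
      rw [if_neg] at h2
      · simpa using h2
      · rw [Finsupp.single_le_iff] at hle ⊢
        simpa using hle
  obtain ⟨w, hw⟩ := hdvd
  refine ⟨w, hw, ?_⟩
  have hreg := (isRegular_X_pow (n := (1 : Fin 2)) (R := A) p).left
  apply hreg
  rw [hw] at h
  linear_combination h

/-- Given `f1, f2` homogeneous of degrees `d1 ≤ d2` forming a regular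
sequence in `A[X1,X2]` and `β = (β1, β2)` with `β1 + β2 ≤ d1 − 1`, any two decompositions
`f_i = X1^{β1+1} f_{i,1} + X2^{β2+1} f_{i,2}` (with `f_{i,j}` homogeneous of degree
`d_i − β_j − 1`) yield determinants `det (f_{i,j})` whose classes in
`B = A[X1,X2]/(f1,f2)` coincide. -/
theorem stmt1 {A : Type*} [CommRing A] [Nontrivial A] (d1 d2 : ℕ)
    (hd1 : 1 ≤ d1) (hd12 : d1 ≤ d2)
    (f1 f2 : MvPolynomial (Fin 2) A)
    (hf1 : f1.IsHomogeneous d1) (hf2 : f2.IsHomogeneous d2)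
    (hreg : RingTheory.Sequence.IsRegular (MvPolynomial (Fin 2) A) [f1, f2])
    (β1 β2 : ℕ) (hβ : β1 + β2 + 1 ≤ d1)
    (a11 a12 a21 a22 b11 b12 b21 b22 : MvPolynomial (Fin 2) A)
    (ha11 : a11.IsHomogeneous (d1 - β1 - 1)) (ha12 : a12.IsHomogeneous (d1 - β2 - 1))
    (ha21 : a21.IsHomogeneous (d2 - β1 - 1)) (ha22 : a22.IsHomogeneous (d2 - β2 - 1))
    (hb11 : b11.IsHomogeneous (d1 - β1 - 1)) (hb12 : b12.IsHomogeneous (d1 - β2 - 1))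
    (hb21 : b21.IsHomogeneous (d2 - β1 - 1)) (hb22 : b22.IsHomogeneous (d2 - β2 - 1))
    (hfa1 : f1 = X 0 ^ (β1 + 1) * a11 + X 1 ^ (β2 + 1) * a12)
    (hfa2 : f2 = X 0 ^ (β1 + 1) * a21 + X 1 ^ (β2 + 1) * a22)
    (hfb1 : f1 = X 0 ^ (β1 + 1) * b11 + X 1 ^ (β2 + 1) * b12)
    (hfb2 : f2 = X 0 ^ (β1 + 1) * b21 + X 1 ^ (β2 + 1) * b22) :
    (a11 * a22 - a12 * a21) - (b11 * b22 - b12 * b21) ∈ Ideal.span {f1, f2} := by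
  obtain ⟨w1, hw1, hw1'⟩ := aux_syzygy (β1 + 1) (β2 + 1) (a11 - b11) (a12 - b12)
    (by linear_combination hfb1 - hfa1)
  obtain ⟨w2, hw2, hw2'⟩ := aux_syzygy (β1 + 1) (β2 + 1) (a21 - b21) (a22 - b22)
    (by linear_combination hfb2 - hfa2)
  have key : (a11 * a22 - a12 * a21) - (b11 * b22 - b12 * b21) = w1 * f2 - w2 * f1 := by
    have e11 : a11 = b11 + X 1 ^ (β2 + 1) * w1 := by linear_combination hw1
    have e12 : a12 = b12 - X 0 ^ (β1 + 1) * w1 := by linear_combination hw1'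
    have e21 : a21 = b21 + X 1 ^ (β2 + 1) * w2 := by linear_combination hw2
    have e22 : a22 = b22 - X 0 ^ (β1 + 1) * w2 := by linear_combination hw2'
    rw [e11, e12, e21, e22]
    linear_combination w2 * hfb1 - w1 * hfb2
  rw [key]
  exact sub_mem (Ideal.mul_mem_left _ _ (Ideal.subset_span (by simp)))
    (Ideal.mul_mem_left _ _ (Ideal.subset_span (by simp)))
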